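/- arXiv:2309.11388 — 3 statements merged into one kernel-verified Lean document; each statement's English description precedes it below -/
import Mathlib

section
/- (Kakeya–Hornich, finite-union criterion) Let ∑ z_n be a convergent series of positive reals with z_n ≥ z_{n+1} for all n. Then E(z_n) is a finite union of closed bounded intervals if and only if z_n ≤ ∑_{k>n} z_k for all but finitely many n. -/
/-!
Write `r n = ∑_{k > n} b k` for the tails of the series. If `b n ≤ r n` for all `n`, the greedy
expansion (take `b n` whenever it does not overshoot `x`) reaches every `x ∈ [0, ∑ b]`, so the
achievement set is that interval (Kakeya). If this holds only from `M` on, the achievement set is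
the union of the `2^M` translates of the interval achieved by the tail series, one for each
subsum of the first `M` terms.

Conversely, for a nonincreasing series every subsum is either `≤ r m` (it uses no term of index
`≤ m`) or `≥ b m`, while `r m` is itself a subsum. Hence whenever `r m < b m`, the point `r m`
is a right endpoint of one of the intervals; since `r` is strictly decreasing, infinitely many
such `m` would give infinitely many endpoints.
-/

open Set Finset

/-- The achievement set (set of all subsums) of the series `∑_{n ≥ 1} z n`. -/
def subsums (z : ℕ → ℝ) : Set ℝ :=
  {y | ∃ c : ℕ → Bool, HasSum (fun n => if c (n + 1) then z (n + 1) else 0) y}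

open Filter Topology

def achievementSet (b : ℕ → ℝ) : Set ℝ :=
  {y | ∃ s : Set ℕ, HasSum (s.indicator b) y}

/-- `∑_{k ≥ n} b k`; the tail `r n` of the header is `seriesTail b (n + 1)`. -/
noncomputable def seriesTail (b : ℕ → ℝ) (n : ℕ) : ℝ :=
  ∑' k, b (k + n)

def IsFiniteUnionIcc (A : Set ℝ) : Prop :=
  ∃ S : Finset (ℝ × ℝ), (∀ p ∈ S, p.1 ≤ p.2) ∧ A = ⋃ p ∈ S, Icc p.1 p.2

lemma subsums_eq_achievementSet (z : ℕ → ℝ) :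
    subsums z = achievementSet (fun n => z (n + 1)) := by
  classical
  ext y
  constructor
  · rintro ⟨c, hc⟩
    refine ⟨{n | c (n + 1)}, ?_⟩
    convert hc using 1
    ext n
    simp [Set.indicator_apply]
  · rintro ⟨s, hs⟩
    refine ⟨fun n => decide (n - 1 ∈ s), ?_⟩
    convert hs using 1
    ext n
    simp [Set.indicator_apply]

variable {b : ℕ → ℝ}

lemma seriesTail_shift (M n : ℕ) : seriesTail (fun k => b (k + M)) n = seriesTail b (n + M) := by
  simp only [seriesTail, add_assoc]

lemma seriesTail_eq_add (hs : Summable b) (n : ℕ) :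
    seriesTail b n = b n + seriesTail b (n + 1) := by
  rw [seriesTail, ((summable_nat_add_iff n).2 hs).tsum_eq_zero_add, seriesTail]
  simp only [zero_add, add_right_comm _ 1 n, add_assoc]

lemma tendsto_seriesTail : Tendsto (seriesTail b) atTop (𝓝 0) :=
  tendsto_sum_nat_add b

lemma strictAnti_seriesTail (hb : ∀ n, 0 < b n) (hs : Summable b) : StrictAnti (seriesTail b) :=
  strictAnti_nat_of_succ_lt fun n => by linarith [seriesTail_eq_add hs n, hb n]

lemma hasSum_indicator_Ici (hs : Summable b) (n : ℕ) :
    HasSum ((Ici n).indicator b) (seriesTail b n) := by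
  have hsum : ∑ i ∈ range n, (Ici n).indicator b i = 0 :=
    Finset.sum_eq_zero fun i hi => Set.indicator_of_notMem (by simpa using hi) b
  have htail : HasSum (fun k => (Ici n).indicator b (k + n)) (seriesTail b n) := by
    simpa [seriesTail, Set.indicator_of_mem] using ((summable_nat_add_iff n).2 hs).hasSum
  simpa [hsum] using (hasSum_nat_add_iff n).1 htail

lemma seriesTail_mem_achievementSet (hs : Summable b) (n : ℕ) :
    seriesTail b n ∈ achievementSet b :=
  ⟨Ici n, hasSum_indicator_Ici hs n⟩

lemma achievementSet_gap (hb : ∀ n, 0 ≤ b n) (hanti : Antitone b) (hs : Summable b) (m : ℕ)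
    {y : ℝ} (hy : y ∈ achievementSet b) : y ≤ seriesTail b (m + 1) ∨ b m ≤ y := by
  obtain ⟨s, hy⟩ := hy
  by_cases hsm : ∃ k ∈ s, k ≤ m
  · obtain ⟨k, hks, hkm⟩ := hsm
    right
    calc b m ≤ b k := hanti hkm
      _ = s.indicator b k := (Set.indicator_of_mem hks b).symm
      _ ≤ y := le_hasSum hy k fun j _ => Set.indicator_nonneg (fun n _ => hb n) j
  · push Not at hsm
    left
    exact hasSum_le (Set.indicator_le_indicator_of_subset (fun k hk => hsm k hk) hb) hy
      (hasSum_indicator_Ici hs (m + 1))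

lemma mem_image_snd_of_gap {A : Set ℝ} {S : Finset (ℝ × ℝ)} (hA : A = ⋃ p ∈ S, Icc p.1 p.2)
    {x c : ℝ} (hx : x ∈ A) (hxc : x < c) (hgap : ∀ y ∈ A, y ≤ x ∨ c ≤ y) :
    x ∈ S.image Prod.snd := by
  rw [hA] at hx hgap
  simp only [Set.mem_iUnion, exists_prop] at hx hgap
  obtain ⟨p, hpS, hp1, hp2⟩ := hx
  refine Finset.mem_image.2 ⟨p, hpS, (hp2.antisymm ?_).symm⟩
  by_contra! hlt
  set y := min p.2 ((x + c) / 2)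
  rcases hgap y ⟨p, hpS, hp1.trans (le_min hlt.le (by linarith)), min_le_left _ _⟩ with h | h
  · exact (lt_min hlt (by linarith)).not_ge h
  · exact ((min_le_right _ _).trans_lt (by linarith)).not_ge h

lemma eventually_le_seriesTail_of_isFiniteUnionIcc (hb : ∀ n, 0 < b n) (hanti : Antitone b)
    (hs : Summable b) (hfin : IsFiniteUnionIcc (achievementSet b)) :
    ∀ᶠ n in atTop, b n ≤ seriesTail b (n + 1) := by
  obtain ⟨S, -, hS⟩ := hfin
  by_contra hbad
  rw [not_eventually, Nat.frequently_atTop_iff_infinite] at hbad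
  have hinj : InjOn (fun n => seriesTail b (n + 1)) {n | ¬ b n ≤ seriesTail b (n + 1)} :=
    fun m _ n _ h => Nat.succ_injective ((strictAnti_seriesTail hb hs).injective h)
  refine (hbad.image hinj) ((S.image Prod.snd).finite_toSet.subset ?_)
  rintro _ ⟨n, hn, rfl⟩
  exact mem_image_snd_of_gap hS (seriesTail_mem_achievementSet hs _) (not_le.1 hn)
    fun y hy => achievementSet_gap (fun n => (hb n).le) hanti hs n hy

lemma achievementSet_subset_Icc (hb : ∀ n, 0 ≤ b n) (hs : Summable b) :
    achievementSet b ⊆ Icc 0 (∑' n, b n) := by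
  rintro y ⟨s, hy⟩
  exact ⟨hy.nonneg (Set.indicator_nonneg fun n _ => hb n),
    hasSum_le (Set.indicator_le_self' fun n _ => hb n) hy hs.hasSum⟩

section Greedy

variable (b) (x : ℝ)

noncomputable def greedySum : ℕ → ℝ
  | 0 => 0
  | n + 1 => if greedySum n + b n ≤ x then greedySum n + b n else greedySum n

def greedySet : Set ℕ :=
  {n | greedySum b x n + b n ≤ x}

lemma greedySum_eq_sum (n : ℕ) :
    greedySum b x n = ∑ i ∈ range n, (greedySet b x).indicator b i := by
  induction n with
  | zero => rfl
  | succ n ih =>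
    rw [Finset.sum_range_succ, ← ih, greedySum]
    by_cases h : greedySum b x n + b n ≤ x <;> simp [h, greedySet]

variable {b x}

lemma greedySum_le (hx : 0 ≤ x) (n : ℕ) : greedySum b x n ≤ x := by
  induction n with
  | zero => exact hx
  | succ n ih =>
    rw [greedySum]
    split_ifs with h
    exacts [h, ih]

lemma sub_greedySum_le_seriesTail (hs : Summable b)
    (hcond : ∀ n, b n ≤ seriesTail b (n + 1)) (hx : x ≤ ∑' n, b n) (n : ℕ) :
    x - greedySum b x n ≤ seriesTail b n := by
  induction n with
  | zero => simpa [greedySum, seriesTail] using hx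
  | succ n ih =>
    rw [seriesTail_eq_add hs] at ih
    rw [greedySum]
    split_ifs with h
    · linarith
    -- a rejected term overshoots, so the remaining gap is below `b n ≤ seriesTail b (n + 1)`
    · linarith [hcond n]

lemma hasSum_indicator_greedySet (hs : Summable b)
    (hcond : ∀ n, b n ≤ seriesTail b (n + 1)) (hx : x ∈ Icc 0 (∑' n, b n)) :
    HasSum ((greedySet b x).indicator b) x := by
  rw [(hs.indicator _).hasSum_iff_tendsto_nat]
  simp only [← greedySum_eq_sum]
  have hlower : Tendsto (fun n => x - seriesTail b n) atTop (𝓝 x) := by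
    simpa using tendsto_seriesTail.const_sub x
  exact tendsto_of_tendsto_of_tendsto_of_le_of_le hlower tendsto_const_nhds
    (fun n => by linarith [sub_greedySum_le_seriesTail hs hcond hx.2 n])
    (greedySum_le hx.1)

end Greedy

theorem achievementSet_eq_Icc (hb : ∀ n, 0 ≤ b n) (hs : Summable b)
    (hcond : ∀ n, b n ≤ seriesTail b (n + 1)) :
    achievementSet b = Icc 0 (∑' n, b n) :=
  (achievementSet_subset_Icc hb hs).antisymm fun x hx =>
    ⟨greedySet b x, hasSum_indicator_greedySet hs hcond hx⟩

lemma mem_achievementSet_iff_exists_sum_add (M : ℕ) {y : ℝ} :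
    y ∈ achievementSet b ↔
      ∃ F ⊆ range M, y - ∑ i ∈ F, b i ∈ achievementSet (fun n => b (n + M)) := by
  classical
  constructor
  · rintro ⟨s, hy⟩
    refine ⟨(range M).filter (· ∈ s), Finset.filter_subset _ _, (· + M) ⁻¹' s, ?_⟩
    have hy' : HasSum (fun n => s.indicator b (n + M)) (y - ∑ i ∈ range M, s.indicator b i) :=
      (hasSum_nat_add_iff M).2 (by rwa [sub_add_cancel])
    convert hy' using 1
    · ext n
      simp [Set.indicator_apply]
    · simp [Finset.sum_filter, Set.indicator_apply]
  · rintro ⟨F, hF, t, ht⟩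
    have hFM : ∀ i ∈ F, i < M := fun i hi => Finset.mem_range.1 (hF hi)
    set s : Set ℕ := ↑F ∪ (· + M) '' t
    have hshift : (fun n => s.indicator b (n + M)) = t.indicator (fun n => b (n + M)) := by
      ext n
      have hnF : n + M ∉ F := fun h => by linarith [hFM _ h]
      simp [s, Set.indicator_apply, hnF]
    have hhead : ∑ i ∈ range M, s.indicator b i = ∑ i ∈ F, b i := by
      rw [Finset.sum_indicator_eq_sum_filter]
      congr 1
      ext i
      simp only [s, Finset.mem_filter, Finset.mem_range, Set.mem_union, Finset.mem_coe,
        Set.mem_image]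
      constructor
      · rintro ⟨hiM, hi | ⟨n, -, rfl⟩⟩
        exacts [hi, by omega]
      · exact fun hi => ⟨hFM i hi, Or.inl hi⟩
    refine ⟨s, ?_⟩
    have := (hasSum_nat_add_iff M).1 (hshift ▸ ht)
    rwa [hhead, sub_add_cancel] at this

lemma achievementSet_eq_biUnion_Icc (hb : ∀ n, 0 ≤ b n) (hs : Summable b) (M : ℕ)
    (hcond : ∀ n, M ≤ n → b n ≤ seriesTail b (n + 1)) :
    achievementSet b = ⋃ F ∈ (range M).powerset,
      Icc (∑ i ∈ F, b i) (∑ i ∈ F, b i + seriesTail b M) := by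
  have htail : achievementSet (fun n => b (n + M)) = Icc 0 (seriesTail b M) := by
    refine achievementSet_eq_Icc (fun n => hb _) ((summable_nat_add_iff M).2 hs) fun n => ?_
    rw [seriesTail_shift, add_right_comm]
    exact hcond _ (Nat.le_add_left M n)
  ext y
  simp only [mem_achievementSet_iff_exists_sum_add M, htail, Set.mem_iUnion, Finset.mem_powerset,
    exists_prop, Set.mem_Icc, sub_nonneg, sub_le_iff_le_add']

lemma isFiniteUnionIcc_achievementSet (hb : ∀ n, 0 ≤ b n) (hs : Summable b)
    (hcond : ∀ᶠ n in atTop, b n ≤ seriesTail b (n + 1)) :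
    IsFiniteUnionIcc (achievementSet b) := by
  classical
  obtain ⟨M, hM⟩ := eventually_atTop.1 hcond
  refine ⟨(range M).powerset.image fun F => (∑ i ∈ F, b i, ∑ i ∈ F, b i + seriesTail b M),
    ?_, ?_⟩
  · simp only [Finset.mem_image]
    rintro _ ⟨F, -, rfl⟩
    exact le_add_of_nonneg_right (tsum_nonneg fun k => hb _)
  · rw [Finset.set_biUnion_finset_image]
    exact achievementSet_eq_biUnion_Icc hb hs M hM

theorem isFiniteUnionIcc_achievementSet_iff (hb : ∀ n, 0 < b n) (hanti : Antitone b)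
    (hs : Summable b) :
    IsFiniteUnionIcc (achievementSet b) ↔ ∀ᶠ n in atTop, b n ≤ seriesTail b (n + 1) :=
  ⟨eventually_le_seriesTail_of_isFiniteUnionIcc hb hanti hs,
    isFiniteUnionIcc_achievementSet (fun n => (hb n).le) hs⟩

/-- Kakeya–Hornich finite-union criterion: the achievement set is a finite union of closed
bounded intervals iff `z n ≤ tail` for all but finitely many `n`. -/
theorem stmt_9 (z : ℕ → ℝ)
    (hpos : ∀ n, 1 ≤ n → 0 < z n)
    (hanti : ∀ n, 1 ≤ n → z (n + 1) ≤ z n)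
    (hsum : Summable (fun n : ℕ => z (n + 1))) :
    (∃ S : Finset (ℝ × ℝ), (∀ p ∈ S, p.1 ≤ p.2) ∧
        subsums z = ⋃ p ∈ S, Set.Icc p.1 p.2) ↔
      ∃ N, ∀ n, N ≤ n → z n ≤ ∑' j : ℕ, z (n + 1 + j) := by
  have hb : ∀ n, 0 < z (n + 1) := fun n => hpos _ (Nat.le_add_left 1 n)
  have hanti' : Antitone fun n => z (n + 1) :=
    antitone_nat_of_succ_le fun n => hanti _ (Nat.le_add_left 1 n)
  have hshift : ∀ n, seriesTail (fun n => z (n + 1)) (n + 1) = ∑' j, z (n + 1 + 1 + j) :=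
    fun n => tsum_congr fun j => congrArg z (by omega)
  rw [← eventually_atTop, ← map_add_atTop_eq_nat 1, eventually_map]
  simp only [← hshift]
  rw [← isFiniteUnionIcc_achievementSet_iff hb hanti' hsum, ← subsums_eq_achievementSet]
  rfl
end

section
/- Let f be monotone increasing on [0,ε] with a·x^r ≤ f(x) ≤ b·x^r on [0,ε], and let k₁ ≥ ... ≥ k_m > 0 with K = ∑ k_i. Set d_{NI} = (a·k_m/(b·K + a·k_m))^{1/r}. Then for every x with 0 < x < min{ε, d_{NI}} and every ℓ ≥ 1, w_{ℓm}(x) > ∑_{j>ℓm} w_j(x); consequently E(w_n(x)) is not a finite union of closed bounded intervals. -/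
open Set Finset

/-- `g m n = 1 + ((n-1) mod m)`: the index of the coefficient used in the `n`-th term. -/
def mgIdx (m n : ℕ) : ℕ := 1 + (n - 1) % m

/-- The `n`-th term (for `n ≥ 1`) of the generalized multigeometric series:
`w_n(x) = k_{g(n)} · f(x^⌊(m+n-1)/m⌋)`. -/
noncomputable def mgTerm (k : ℕ → ℝ) (f : ℝ → ℝ) (m n : ℕ) (x : ℝ) : ℝ :=
  k (mgIdx m n) * f (x ^ ((m + n - 1) / m))

/-- `K = k₁ + ⋯ + k_m`. -/
noncomputable def Ksum (k : ℕ → ℝ) (m : ℕ) : ℝ := ∑ i ∈ Finset.Icc 1 m, k i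

/-- `U_j = k_{j+1} + ⋯ + k_m`. -/
noncomputable def Usum (k : ℕ → ℝ) (m j : ℕ) : ℝ := ∑ i ∈ Finset.Icc (j + 1) m, k i

/-- `L_j = k₁ + ⋯ + k_j`. -/
noncomputable def Lsum (k : ℕ → ℝ) (j : ℕ) : ℝ := ∑ i ∈ Finset.Icc 1 j, k i

/-!
Write `y = x ^ r`. The terms of the `q`-th block `q m < n ≤ (q + 1) m` are `k_s f(x^(q+1))`, so
the tail after `w_{ℓm}` is at most `K b y^(ℓ+1) / (1 - y)`, whereas `w_{ℓm} = k_m f(x^ℓ) ≥ a k_m y^ℓ`;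
the condition `y < a k_m / (b K + a k_m)`, i.e. `x < d_NI`, makes the tail strictly smaller.
As `w_{ℓm}` is also the smallest of `w_1, …, w_{ℓm}`, every subsum either uses one of these terms
(and is `≥ w_{ℓm}`) or none (and is `≤` the tail), so no subsum lies strictly between.
All later `w_{ℓ'm}` are below the tail, hence a closed interval inside the achievement set
contains `w_{ℓm}` for at most one `ℓ`, and finitely many intervals cannot contain them all.
-/

section subsums

variable {z : ℕ → ℝ}

lemma mem_subsums_self {n : ℕ} (hn : 1 ≤ n) : z n ∈ subsums z := by
  obtain ⟨n, rfl⟩ := Nat.exists_eq_add_of_le' hn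
  refine ⟨fun i => decide (i = n + 1), ?_⟩
  convert hasSum_ite_eq n (z (n + 1)) using 2 with i
  by_cases h : i = n <;> simp [h]

lemma summable_tail (hs : Summable fun n => z (n + 1)) (n : ℕ) :
    Summable fun j => z (n + 1 + j) := by
  exact ((summable_nat_add_iff n).2 hs).congr fun j => congrArg z (by omega)

lemma le_tail_of_lt (hz : ∀ n, 0 ≤ z (n + 1)) (hs : Summable fun n => z (n + 1)) {n n' : ℕ}
    (hlt : n < n') : z n' ≤ ∑' j, z (n + 1 + j) := by
  obtain ⟨j, rfl⟩ := Nat.exists_eq_add_of_lt hlt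
  rw [add_right_comm]
  exact (summable_tail hs n).le_tsum j fun i _ => by rw [add_right_comm]; exact hz (n + i)

lemma le_tail_or_le_of_mem_subsums (hz : ∀ n, 0 ≤ z (n + 1))
    (hs : Summable fun n => z (n + 1)) {n : ℕ} (hmin : ∀ i, 1 ≤ i → i ≤ n → z n ≤ z i) {t : ℝ}
    (ht : t ∈ subsums z) : t ≤ ∑' j, z (n + 1 + j) ∨ z n ≤ t := by
  obtain ⟨c, hc⟩ := ht
  have hsel : ∀ i, 0 ≤ (if c (i + 1) then z (i + 1) else 0) := fun i => by
    split_ifs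
    exacts [hz i, le_rfl]
  by_cases hearly : ∃ i < n, c (i + 1) = true
  · obtain ⟨i, hi, hci⟩ := hearly
    right
    calc z n ≤ z (i + 1) := hmin (i + 1) (by omega) hi
      _ = if c (i + 1) then z (i + 1) else 0 := by rw [if_pos hci]
      _ ≤ t := le_hasSum hc i fun j _ => hsel j
  · push Not at hearly
    left
    have hhead : ∑ i ∈ range n, (if c (i + 1) then z (i + 1) else 0) = 0 :=
      sum_eq_zero fun i hi => if_neg (hearly i (mem_range.1 hi))
    have hlate := (hasSum_nat_add_iff' n).2 hc
    rw [hhead, sub_zero] at hlate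
    refine hasSum_le (fun j => ?_) hlate (summable_tail hs n).hasSum
    split_ifs
    · exact le_of_eq (by congr 1; omega)
    · rw [add_right_comm]; exact hz (n + j)

lemma not_Icc_subset_subsums (hz : ∀ n, 0 ≤ z (n + 1)) (hs : Summable fun n => z (n + 1))
    {n n' : ℕ} (hlt : n < n') (hgap : ∑' j, z (n + 1 + j) < z n)
    (hmin : ∀ i, 1 ≤ i → i ≤ n → z n ≤ z i) {p q : ℝ} (hp : p ≤ z n') (hq : z n ≤ q) :
    ¬ Icc p q ⊆ subsums z := by
  intro hsub
  obtain ⟨t, htail_lt, hlt_term⟩ := exists_between hgap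
  have htp : p ≤ t := (hp.trans (le_tail_of_lt hz hs hlt)).trans htail_lt.le
  rcases le_tail_or_le_of_mem_subsums hz hs hmin (hsub ⟨htp, hlt_term.le.trans hq⟩) with h | h <;>
    linarith

theorem subsums_ne_biUnion_Icc (hz : ∀ n, 0 ≤ z (n + 1)) (hs : Summable fun n => z (n + 1))
    {I : Set ℕ} (hI : I.Infinite) (hI1 : ∀ n ∈ I, 1 ≤ n)
    (hgap : ∀ n ∈ I, ∑' j, z (n + 1 + j) < z n)
    (hmin : ∀ n ∈ I, ∀ i, 1 ≤ i → i ≤ n → z n ≤ z i) (S : Finset (ℝ × ℝ)) :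
    subsums z ≠ ⋃ p ∈ S, Icc p.1 p.2 := by
  intro hS
  have hsub : ∀ p ∈ S, Icc p.1 p.2 ⊆ subsums z := fun p hp =>
    hS ▸ subset_biUnion_of_mem (u := fun p : ℝ × ℝ => Icc p.1 p.2) hp
  have hsing : ∀ p ∈ S, {n ∈ I | z n ∈ Icc p.1 p.2}.Subsingleton := by
    rintro p hp n ⟨hnI, hn⟩ n' ⟨hn'I, hn'⟩
    by_contra hne
    rcases lt_or_gt_of_ne hne with h | h
    · exact not_Icc_subset_subsums hz hs h (hgap n hnI) (hmin n hnI) hn'.1 hn.2 (hsub p hp)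
    · exact not_Icc_subset_subsums hz hs h (hgap n' hn'I) (hmin n' hn'I) hn.1 hn'.2 (hsub p hp)
  refine hI ((S.finite_toSet.biUnion fun p hp => (hsing p hp).finite).subset fun n hn => ?_)
  obtain ⟨p, hp, hmem⟩ := mem_iUnion₂.1 (hS ▸ mem_subsums_self (hI1 n hn))
  exact mem_iUnion₂.2 ⟨p, hp, hn, hmem⟩

end subsums

theorem hasSum_mul_mod_div {α : Type*} [NonUnitalNonAssocSemiring α] [TopologicalSpace α]
    [IsTopologicalSemiring α] {m : ℕ} (hm : 0 < m) (c : ℕ → α) {u : ℕ → α} {U : α}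
    (hu : HasSum u U) :
    HasSum (fun j => c (j % m) * u (j / m)) ((∑ s ∈ range m, c s) * U) := by
  have hres : ∀ s ∈ range m,
      HasSum (fun j => if j % m = s then c s * u (j / m) else 0) (c s * U) := by
    intro s hs
    have hs : s < m := mem_range.1 hs
    have hinj : Function.Injective fun q => q * m + s := fun q q' h => by
      simpa [hm.ne'] using h
    rw [← hinj.hasSum_iff]
    · convert hu.mul_left (c s) using 2 with q
      simp [Nat.add_mul_mod_self_right, Nat.mod_eq_of_lt hs, add_comm, Nat.add_mul_div_right,
        Nat.div_eq_of_lt hs, hm]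
    · rintro j hj
      rw [if_neg]
      rintro rfl
      exact hj ⟨j / m, by simpa [mul_comm] using Nat.div_add_mod j m⟩
  convert hasSum_sum hres using 1
  · ext j
    simp [Nat.mod_lt j hm]
  · rw [sum_mul]

lemma Ksum_eq_sum_range (k : ℕ → ℝ) (m : ℕ) : Ksum k m = ∑ s ∈ range m, k (s + 1) := by
  rw [Ksum, range_eq_Ico, sum_Ico_add', zero_add, Finset.Ico_add_one_right_eq_Icc]

section mgTerm

variable {k : ℕ → ℝ} {f : ℝ → ℝ} {m : ℕ} {x : ℝ}

lemma mgTerm_succ (hm : 0 < m) (n : ℕ) :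
    mgTerm k f m (n + 1) x = k (n % m + 1) * f (x ^ (n / m + 1)) := by
  rw [mgTerm, mgIdx, Nat.add_sub_cancel, add_comm 1, show m + (n + 1) - 1 = n + m by omega,
    Nat.add_div_right n hm]

lemma mgTerm_mul (hm : 0 < m) {ℓ : ℕ} (hℓ : 1 ≤ ℓ) :
    mgTerm k f m (ℓ * m) x = k m * f (x ^ ℓ) := by
  obtain ⟨ℓ, rfl⟩ := Nat.exists_eq_add_of_le' hℓ
  have hmod : (ℓ * m + (m - 1)) % m = m - 1 := by
    rw [add_comm, Nat.add_mul_mod_self_right, Nat.mod_eq_of_lt (by omega)]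
  have hdiv : (ℓ * m + (m - 1)) / m = ℓ := by
    rw [add_comm, Nat.add_mul_div_right _ _ hm, Nat.div_eq_of_lt (by omega), zero_add]
  rw [show (ℓ + 1) * m = ℓ * m + (m - 1) + 1 by rw [add_mul]; omega, mgTerm_succ hm, hmod, hdiv,
    Nat.sub_add_cancel hm]

lemma mgTerm_tail (hm : 0 < m) (ℓ j : ℕ) :
    mgTerm k f m (ℓ * m + 1 + j) x = k (j % m + 1) * f (x ^ (ℓ + j / m + 1)) := by
  rw [add_right_comm, add_comm (ℓ * m), mgTerm_succ hm, Nat.add_mul_mod_self_right,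
    Nat.add_mul_div_right _ _ hm, add_comm (j / m)]

end mgTerm

section powers

variable {f : ℝ → ℝ} {a b r ε x : ℝ}

lemma pow_mem_Icc_zero (hx0 : 0 ≤ x) (hx1 : x ≤ 1) (hxε : x ≤ ε) {e : ℕ} (he : 1 ≤ e) :
    x ^ e ∈ Icc 0 ε :=
  ⟨pow_nonneg hx0 e, (pow_le_of_le_one hx0 hx1 (by omega)).trans hxε⟩

lemma rpow_bounds_apply_pow (hf : ∀ t ∈ Icc (0:ℝ) ε, a * t ^ r ≤ f t ∧ f t ≤ b * t ^ r)
    (hx0 : 0 ≤ x) (hx1 : x ≤ 1) (hxε : x ≤ ε) {e : ℕ} (he : 1 ≤ e) :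
    a * (x ^ r) ^ e ≤ f (x ^ e) ∧ f (x ^ e) ≤ b * (x ^ r) ^ e := by
  rw [← Real.rpow_mul_natCast hx0, mul_comm r, Real.rpow_natCast_mul hx0]
  exact hf _ (pow_mem_Icc_zero hx0 hx1 hxε he)

lemma MonotoneOn.apply_pow_le_apply_pow (hmono : MonotoneOn f (Icc 0 ε)) (hx0 : 0 ≤ x)
    (hx1 : x ≤ 1) (hxε : x ≤ ε) {e e' : ℕ} (he : 1 ≤ e) (hee' : e ≤ e') :
    f (x ^ e') ≤ f (x ^ e) :=
  hmono (pow_mem_Icc_zero hx0 hx1 hxε (he.trans hee')) (pow_mem_Icc_zero hx0 hx1 hxε he)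
    (pow_le_pow_of_le_one hx0 hx1 hee')

end powers

section estimates

variable {k : ℕ → ℝ} {f : ℝ → ℝ} {m : ℕ} {x a b y : ℝ}

lemma mgTerm_succ_nonneg (hm : 0 < m) (hk : ∀ i j, 1 ≤ i → i ≤ j → j ≤ m → k j ≤ k i)
    (hkm : 0 < k m) (hf0 : ∀ e, 1 ≤ e → 0 ≤ f (x ^ e)) (n : ℕ) :
    0 ≤ mgTerm k f m (n + 1) x := by
  have hn := Nat.mod_lt n hm
  rw [mgTerm_succ hm]
  exact mul_nonneg (hkm.le.trans (hk _ _ (by omega) (by omega) le_rfl)) (hf0 _ le_add_self)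

lemma mgTerm_mul_le (hm : 0 < m) (hk : ∀ i j, 1 ≤ i → i ≤ j → j ≤ m → k j ≤ k i)
    (hkm : 0 < k m) (hf0 : ∀ e, 1 ≤ e → 0 ≤ f (x ^ e))
    (hanti : ∀ e e', 1 ≤ e → e ≤ e' → f (x ^ e') ≤ f (x ^ e)) {ℓ i : ℕ} (hℓ : 1 ≤ ℓ)
    (hi : 1 ≤ i) (hiℓ : i ≤ ℓ * m) : mgTerm k f m (ℓ * m) x ≤ mgTerm k f m i x := by
  obtain ⟨n, rfl⟩ := Nat.exists_eq_add_of_le' hi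
  have hn := Nat.mod_lt n hm
  have hq : n / m + 1 ≤ ℓ := (Nat.div_lt_iff_lt_mul hm).2 (by omega)
  have hkn : k m ≤ k (n % m + 1) := hk _ _ (by omega) (by omega) le_rfl
  rw [mgTerm_mul hm hℓ, mgTerm_succ hm]
  exact mul_le_mul hkn (hanti _ _ le_add_self hq) (hf0 ℓ hℓ) (hkm.le.trans hkn)

lemma hasSum_tail_majorant (hm : 0 < m) (hy0 : 0 ≤ y) (hy1 : y < 1) (ℓ : ℕ) :
    HasSum (fun j => k (j % m + 1) * (b * y ^ (ℓ + 1) * y ^ (j / m)))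
      (Ksum k m * (b * y ^ (ℓ + 1) * (1 - y)⁻¹)) := by
  rw [Ksum_eq_sum_range]
  exact hasSum_mul_mod_div hm (fun s => k (s + 1))
    ((hasSum_geometric_of_lt_one hy0 hy1).mul_left _)

lemma mgTerm_tail_le (hm : 0 < m) (hk : ∀ i j, 1 ≤ i → i ≤ j → j ≤ m → k j ≤ k i)
    (hkm : 0 < k m) (hup : ∀ e, 1 ≤ e → f (x ^ e) ≤ b * y ^ e) (ℓ j : ℕ) :
    mgTerm k f m (ℓ * m + 1 + j) x ≤ k (j % m + 1) * (b * y ^ (ℓ + 1) * y ^ (j / m)) := by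
  have hj := Nat.mod_lt j hm
  rw [mgTerm_tail hm]
  refine mul_le_mul_of_nonneg_left ((hup _ le_add_self).trans_eq (by ring))
    (hkm.le.trans (hk _ _ (by omega) (by omega) le_rfl))

lemma summable_mgTerm_tail (hm : 0 < m) (hk : ∀ i j, 1 ≤ i → i ≤ j → j ≤ m → k j ≤ k i)
    (hkm : 0 < k m) (hf0 : ∀ e, 1 ≤ e → 0 ≤ f (x ^ e))
    (hup : ∀ e, 1 ≤ e → f (x ^ e) ≤ b * y ^ e) (hy0 : 0 ≤ y) (hy1 : y < 1) (ℓ : ℕ) :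
    Summable fun j => mgTerm k f m (ℓ * m + 1 + j) x :=
  (hasSum_tail_majorant hm hy0 hy1 ℓ).summable.of_nonneg_of_le
    (fun j => add_right_comm (ℓ * m) 1 j ▸ mgTerm_succ_nonneg hm hk hkm hf0 (ℓ * m + j))
    (mgTerm_tail_le hm hk hkm hup ℓ)

lemma tsum_mgTerm_tail_lt (hm : 0 < m) (hk : ∀ i j, 1 ≤ i → i ≤ j → j ≤ m → k j ≤ k i)
    (hkm : 0 < k m) (hf0 : ∀ e, 1 ≤ e → 0 ≤ f (x ^ e))
    (hlow : ∀ e, 1 ≤ e → a * y ^ e ≤ f (x ^ e)) (hup : ∀ e, 1 ≤ e → f (x ^ e) ≤ b * y ^ e)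
    (hy0 : 0 < y) (hy1 : y < 1) (hy : y * (b * Ksum k m + a * k m) < a * k m) {ℓ : ℕ}
    (hℓ : 1 ≤ ℓ) : ∑' j, mgTerm k f m (ℓ * m + 1 + j) x < mgTerm k f m (ℓ * m) x := by
  have h1y : 0 < 1 - y := sub_pos.2 hy1
  have hratio : b * Ksum k m * y / (1 - y) < a * k m := by
    rw [div_lt_iff₀ h1y]
    linarith
  calc ∑' j, mgTerm k f m (ℓ * m + 1 + j) x
      ≤ Ksum k m * (b * y ^ (ℓ + 1) * (1 - y)⁻¹) :=
        hasSum_le (mgTerm_tail_le hm hk hkm hup ℓ)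
          (summable_mgTerm_tail hm hk hkm hf0 hup hy0.le hy1 ℓ).hasSum
          (hasSum_tail_majorant hm hy0.le hy1 ℓ)
    _ = y ^ ℓ * (b * Ksum k m * y / (1 - y)) := by rw [pow_succ]; field_simp
    _ < y ^ ℓ * (a * k m) := mul_lt_mul_of_pos_left hratio (pow_pos hy0 ℓ)
    _ ≤ k m * f (x ^ ℓ) := by nlinarith [hlow ℓ hℓ]
    _ = mgTerm k f m (ℓ * m) x := (mgTerm_mul hm hℓ).symm

end estimates

theorem stmt_13_general (f : ℝ → ℝ) (a b r ε : ℝ) (ha : 0 < a) (hb : 0 < b) (hr : 0 < r)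
    (hε1 : ε < 1)
    (hmono : MonotoneOn f (Set.Icc 0 ε))
    (hf : ∀ x ∈ Set.Icc (0:ℝ) ε, a * x ^ r ≤ f x ∧ f x ≤ b * x ^ r)
    (m : ℕ) (hm : 1 ≤ m) (k : ℕ → ℝ)
    (hkmono : ∀ i j, 1 ≤ i → i ≤ j → j ≤ m → k j ≤ k i)
    (hkpos : 0 < k m)
    (dNI : ℝ)
    (hdNI : dNI = (a * k m / (b * Ksum k m + a * k m)) ^ (1 / r)) :
    ∀ x : ℝ, 0 < x → x < min ε dNI →
      (∀ ℓ : ℕ, 1 ≤ ℓ →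
        (∑' j : ℕ, mgTerm k f m (ℓ * m + 1 + j) x) < mgTerm k f m (ℓ * m) x) ∧
      ¬ ∃ S : Finset (ℝ × ℝ), (∀ p ∈ S, p.1 ≤ p.2) ∧
          subsums (fun n => mgTerm k f m n x) = ⋃ p ∈ S, Set.Icc p.1 p.2 := by
  intro x hx hxlt
  obtain ⟨hxε, hxd⟩ := lt_min_iff.1 hxlt
  have hx1 : x ≤ 1 := (hxε.trans hε1).le
  have hbK : 0 ≤ b * Ksum k m := mul_nonneg hb.le <| sum_nonneg fun i hi =>
    hkpos.le.trans (hkmono _ _ (mem_Icc.1 hi).1 (mem_Icc.1 hi).2 le_rfl)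
  have hden : 0 < b * Ksum k m + a * k m := add_pos_of_nonneg_of_pos hbK (mul_pos ha hkpos)
  have hy0 : 0 < x ^ r := Real.rpow_pos_of_pos hx r
  have hy : x ^ r * (b * Ksum k m + a * k m) < a * k m := by
    rw [← lt_div_iff₀ hden, ← Real.lt_rpow_inv_iff_of_pos hx.le (by positivity) hr, ← one_div,
      ← hdNI]
    exact hxd
  have hy1 : x ^ r < 1 := by
    by_contra! h
    nlinarith [mul_le_mul_of_nonneg_right h hden.le]
  have hlow e he := (rpow_bounds_apply_pow hf hx.le hx1 hxε.le (e := e) he).1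
  have hup e he := (rpow_bounds_apply_pow hf hx.le hx1 hxε.le (e := e) he).2
  have hf0 : ∀ e, 1 ≤ e → 0 ≤ f (x ^ e) := fun e he =>
    (mul_pos ha (pow_pos hy0 e)).le.trans (hlow e he)
  have hgap : ∀ ℓ, 1 ≤ ℓ →
      ∑' j, mgTerm k f m (ℓ * m + 1 + j) x < mgTerm k f m (ℓ * m) x := fun ℓ hℓ =>
    tsum_mgTerm_tail_lt hm hkmono hkpos hf0 hlow hup hy0 hy1 hy hℓ
  have hinj : Function.Injective fun ℓ : ℕ => (ℓ + 1) * m := fun ℓ ℓ' h => by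
    simpa using Nat.eq_of_mul_eq_mul_right hm h
  refine ⟨hgap, ?_⟩
  rintro ⟨S, -, hS⟩
  refine subsums_ne_biUnion_Icc (mgTerm_succ_nonneg hm hkmono hkpos hf0)
    (by simpa [add_comm] using summable_mgTerm_tail hm hkmono hkpos hf0 hup hy0.le hy1 0)
    (Set.infinite_range_of_injective hinj) ?_ ?_ ?_ S hS
  · rintro _ ⟨ℓ, rfl⟩
    exact hm.trans (Nat.le_mul_of_pos_left m ℓ.succ_pos)
  · rintro _ ⟨ℓ, rfl⟩
    exact hgap (ℓ + 1) le_add_self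
  · rintro _ ⟨ℓ, rfl⟩ i hi hiℓ
    exact mgTerm_mul_le hm hkmono hkpos hf0
      (fun _ _ => hmono.apply_pow_le_apply_pow hx.le hx1 hxε.le) le_add_self hi hiℓ

/-- For `0 < x < min{ε, d_{NI}}`, each term `w_{ℓm}(x)` strictly exceeds its tail; hence
the achievement set is not a finite union of closed bounded intervals. -/
theorem stmt_13 (f : ℝ → ℝ) (a b r ε : ℝ) (ha : 0 < a) (hb : 0 < b) (hr : 0 < r)
    (hε : 0 < ε) (hε1 : ε < 1)
    (hmono : MonotoneOn f (Set.Icc 0 ε))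
    (hf : ∀ x ∈ Set.Icc (0:ℝ) ε, a * x ^ r ≤ f x ∧ f x ≤ b * x ^ r)
    (m : ℕ) (hm : 1 ≤ m) (k : ℕ → ℝ)
    (hkmono : ∀ i j, 1 ≤ i → i ≤ j → j ≤ m → k j ≤ k i)
    (hkpos : 0 < k m)
    (dNI : ℝ)
    (hdNI : dNI = (a * k m / (b * Ksum k m + a * k m)) ^ (1 / r)) :
    ∀ x : ℝ, 0 < x → x < min ε dNI →
      (∀ ℓ : ℕ, 1 ≤ ℓ →
        (∑' j : ℕ, mgTerm k f m (ℓ * m + 1 + j) x) < mgTerm k f m (ℓ * m) x) ∧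
      ¬ ∃ S : Finset (ℝ × ℝ), (∀ p ∈ S, p.1 ≤ p.2) ∧
          subsums (fun n => mgTerm k f m n x) = ⋃ p ∈ S, Set.Icc p.1 p.2 :=
  stmt_13_general f a b r ε ha hb hr hε1 hmono hf m hm k hkmono hkpos dNI hdNI
end

section
/- Let f be monotone increasing on [0,ε] with a·x^r ≤ f(x) ≤ b·x^r on [0,ε], k₁ ≥ ... ≥ k_m > 0, and set d_C = (min_{1≤j≤m} (a·k_j − b·U_j)/(a·k_j + b·L_j))^{1/r}, where U_j = k_{j+1}+...+k_m and L_j = k₁+...+k_j. If d_C > 0 (i.e., a·k_j > b·U_j for all j), then for every x with 0 < x < min{ε, d_C} and every n ≥ 1, w_n(x) > ∑_{ℓ>n} w_ℓ(x); consequently E(w_n(x)) is homeomorphic to the Cantor set. -/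
open Set Finset

/-!
Compare the series with its model `W_ℓ = k_{g(ℓ)} t^{⌊(m+ℓ-1)/m⌋}` (`mgTerm k id m ℓ t`), where
`t = x^r`; it satisfies `a W_ℓ ≤ w_ℓ(x) ≤ b W_ℓ`. The model is geometric along each residue class
mod `m` (`W_{ℓ+m} = t W_ℓ`), so its tail after `n` is the next window of `m` terms divided by
`1 - t`. For `n ≡ j (mod m)` and `p = ⌊(m+n-1)/m⌋` this window is `t^p (U_j + t L_j)` while
`W_n = k_j t^p`, hence `∑_{ℓ>n} w_ℓ ≤ b t^p (U_j + t L_j) / (1 - t) < a k_j t^p ≤ w_n`; the middle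
inequality is `t (a k_j + b L_j) < a k_j - b U_j`, i.e. `x < d_C`.

A positive series whose terms dominate their tails sums distinct 0-1 selections to distinct values
(compare at the first index where they differ), so `c ↦ ∑ c_n w_n` is a continuous injection of
the compact Cantor space `ℕ → Bool` onto the achievement set, hence a homeomorphism.
-/

noncomputable def boolSum (u : ℕ → ℝ) (c : ℕ → Bool) : ℝ :=
  ∑' n, if c n then u n else 0

section Kakeya

variable {u : ℕ → ℝ}

theorem summable_ite_of_nonneg (hu : ∀ n, 0 ≤ u n) (hs : Summable u) (c : ℕ → Bool) :
    Summable fun n => if c n then u n else 0 :=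
  hs.of_nonneg_of_le (fun n => by split <;> simp [hu n]) (fun n => by split <;> simp [hu n])

theorem boolSum_lt_of_lex (hu : ∀ n, 0 ≤ u n) (hs : Summable u)
    (htail : ∀ n, ∑' i, u (n + 1 + i) < u n) {c c' : ℕ → Bool} {n : ℕ}
    (hagree : ∀ j < n, c j = c' j) (hc : c n = false) (hc' : c' n = true) :
    boolSum u c < boolSum u c' := by
  let g (d : ℕ → Bool) (i : ℕ) : ℝ := if d i then u i else 0
  have hsplit (d : ℕ → Bool) :
      boolSum u d = ∑ i ∈ range n, g d i + (g d n + ∑' i, g d (i + (n + 1))) := by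
    rw [← add_assoc, ← sum_range_succ, (summable_ite_of_nonneg hu hs d).sum_add_tsum_nat_add]
    rfl
  have hprefix : ∑ i ∈ range n, g c i = ∑ i ∈ range n, g c' i :=
    sum_congr rfl fun i hi => by simp only [g, hagree i (mem_range.1 hi)]
  have hrest_le : ∑' i, g c (i + (n + 1)) ≤ ∑' i, u (n + 1 + i) := by
    have hs' : Summable fun i => u (n + 1 + i) := by
      simpa only [add_comm] using (summable_nat_add_iff (n + 1)).2 hs
    refine (summable_ite_of_nonneg hu hs c).comp_injective (add_left_injective (n + 1))
      |>.tsum_le_tsum (fun i => ?_) hs'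
    simp only [g, add_comm i]
    split <;> simp [hu]
  have hrest_nonneg : 0 ≤ ∑' i, g c' (i + (n + 1)) :=
    tsum_nonneg fun i => by simp only [g]; split <;> simp [hu]
  rw [hsplit, hsplit, hprefix, show g c n = 0 by simp [g, hc], show g c' n = u n by simp [g, hc']]
  linarith [htail n]

theorem boolSum_strictMono (hu : ∀ n, 0 ≤ u n) (hs : Summable u)
    (htail : ∀ n, ∑' i, u (n + 1 + i) < u n) :
    StrictMono fun c : Lex (ℕ → Bool) => boolSum u (ofLex c) := by
  rintro c c' ⟨n, hagree, hlt⟩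
  obtain ⟨hc, hc'⟩ := Bool.lt_iff.1 hlt
  exact boolSum_lt_of_lex hu hs htail hagree hc hc'

theorem continuous_boolSum (hu : ∀ n, 0 ≤ u n) (hs : Summable u) : Continuous (boolSum u) :=
  continuous_tsum
    (fun n => (continuous_of_discreteTopology (f := fun b : Bool => if b then u n else 0)).comp
      (continuous_apply n)) hs
    fun n c => by split <;> simp [abs_of_nonneg (hu n), hu n]

theorem nonempty_range_boolSum_homeomorph_cantorSet (hu : ∀ n, 0 ≤ u n) (hs : Summable u)
    (htail : ∀ n, ∑' i, u (n + 1 + i) < u n) : Nonempty (range (boolSum u) ≃ₜ cantorSet) := by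
  have hinj : Function.Injective (boolSum u) :=
    (boolSum_strictMono hu hs htail).injective.comp toLex.injective
  have hemb := ((continuous_boolSum hu hs).isClosedEmbedding hinj).isEmbedding
  exact ⟨hemb.toHomeomorph.symm.trans cantorSetHomeomorphNatToBool.symm⟩

end Kakeya

theorem subsums_eq_range_boolSum {z : ℕ → ℝ} (hz : ∀ n, 0 ≤ z (n + 1))
    (hs : Summable fun n => z (n + 1)) : subsums z = range (boolSum fun n => z (n + 1)) := by
  ext y
  constructor
  · rintro ⟨c, hc⟩
    exact ⟨fun n => c (n + 1), hc.tsum_eq⟩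
  · rintro ⟨c, rfl⟩
    exact ⟨fun n => c (n - 1), (summable_ite_of_nonneg hz hs c).hasSum⟩

theorem nonempty_subsums_homeomorph_cantorSet {z : ℕ → ℝ} (hz : ∀ n, 1 ≤ n → 0 ≤ z n)
    (hs : Summable fun n => z (n + 1)) (htail : ∀ n, 1 ≤ n → ∑' j, z (n + 1 + j) < z n) :
    Nonempty (subsums z ≃ₜ cantorSet) := by
  have hz' : ∀ n, 0 ≤ z (n + 1) := fun n => hz _ n.succ_pos
  rw [subsums_eq_range_boolSum hz' hs]
  refine nonempty_range_boolSum_homeomorph_cantorSet hz' hs fun n => ?_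
  convert htail (n + 1) n.succ_pos using 4
  omega

theorem hasSum_of_add_period {f : ℕ → ℝ} {m : ℕ} {t : ℝ} (hm : 0 < m) (hf : ∀ n, 0 ≤ f n)
    (ht0 : 0 ≤ t) (ht1 : t < 1) (hper : ∀ n, f (n + m) = t * f n) :
    HasSum f ((∑ n ∈ range m, f n) / (1 - t)) := by
  set S := ∑ n ∈ range m, f n
  have hS : 0 ≤ S := sum_nonneg fun n _ => hf n
  have h1t : 0 < 1 - t := sub_pos.2 ht1
  have hshift (N : ℕ) : ∑ n ∈ range (m + N), f n = S + t * ∑ n ∈ range N, f n := by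
    rw [sum_range_add, mul_sum]
    exact congrArg (S + ·) (sum_congr rfl fun n _ => by rw [add_comm, hper])
  have hbound (N : ℕ) : ∑ n ∈ range N, f n ≤ S / (1 - t) := by
    induction N using Nat.strong_induction_on with
    | _ N ih =>
      rcases lt_or_ge N m with hN | hN
      · calc ∑ n ∈ range N, f n ≤ S :=
              sum_le_sum_of_subset_of_nonneg (range_subset_range.2 hN.le) fun n _ _ => hf n
          _ ≤ S / (1 - t) := le_div_self hS h1t (by linarith)
      · obtain ⟨N', rfl⟩ := Nat.exists_eq_add_of_le hN
        calc ∑ n ∈ range (m + N'), f n = S + t * ∑ n ∈ range N', f n := hshift N'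
          _ ≤ S + t * (S / (1 - t)) := by gcongr; exact ih N' (by omega)
          _ = S / (1 - t) := by field_simp; ring
  have hsum : Summable f := summable_of_sum_range_le hf hbound
  have hfix : ∑' n, f n = S + t * ∑' n, f n := by
    rw [← tsum_mul_left, ← hsum.sum_add_tsum_nat_add m]
    simp only [hper, S]
  convert hsum.hasSum
  rw [div_eq_iff h1t.ne']
  linarith

theorem Usum_eq_sum_range (k : ℕ → ℝ) (m j : ℕ) :
    Usum k m j = ∑ s ∈ range (m - j), k (j + 1 + s) := by
  rw [Usum, ← Finset.Ico_add_one_right_eq_Icc, sum_Ico_eq_sum_range, Nat.add_sub_add_right]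

theorem Lsum_eq_sum_range (k : ℕ → ℝ) (j : ℕ) : Lsum k j = ∑ s ∈ range j, k (s + 1) := by
  rw [Lsum, ← Finset.Ico_add_one_right_eq_Icc, sum_Ico_eq_sum_range, Nat.add_sub_cancel]
  simp only [add_comm 1]

section Multigeometric

variable {k : ℕ → ℝ} {m : ℕ}

theorem exists_eq_block (hm : 0 < m) {n : ℕ} (hn : 1 ≤ n) :
    ∃ q i, i < m ∧ n = m * q + i + 1 :=
  ⟨(n - 1) / m, (n - 1) % m, Nat.mod_lt _ hm, by have := Nat.div_add_mod (n - 1) m; omega⟩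

theorem mgTerm_block (k : ℕ → ℝ) (f : ℝ → ℝ) (x : ℝ) {q i : ℕ} (hi : i < m) :
    mgTerm k f m (m * q + i + 1) x = k (i + 1) * f (x ^ (q + 1)) := by
  have hm : 0 < m := by omega
  have hidx : mgIdx m (m * q + i + 1) = i + 1 := by
    rw [mgIdx, Nat.add_sub_cancel, Nat.mul_add_mod, Nat.mod_eq_of_lt hi, add_comm]
  have hexp : (m + (m * q + i + 1) - 1) / m = q + 1 := by
    rw [show m + (m * q + i + 1) - 1 = i + m * (q + 1) by ring_nf; omega,
      Nat.add_mul_div_left _ _ hm, Nat.div_eq_of_lt hi, zero_add]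
  rw [mgTerm, hidx, hexp]

theorem mgTerm_id_add_period (t : ℝ) {ℓ : ℕ} (hm : 0 < m) (hℓ : 1 ≤ ℓ) :
    mgTerm k id m (ℓ + m) t = t * mgTerm k id m ℓ t := by
  obtain ⟨q, i, hi, rfl⟩ := exists_eq_block hm hℓ
  rw [show m * q + i + 1 + m = m * (q + 1) + i + 1 by ring, mgTerm_block k id t hi,
    mgTerm_block k id t hi, id, id, pow_succ t (q + 1)]
  ring

theorem sum_range_mgTerm_id_window (t : ℝ) {q i : ℕ} (hi : i < m) :
    ∑ s ∈ range m, mgTerm k id m (m * q + i + 1 + 1 + s) t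
      = t ^ (q + 1) * (Usum k m (i + 1) + t * Lsum k (i + 1)) := by
  have hinner (s : ℕ) (hs : s < m - (i + 1)) :
      mgTerm k id m (m * q + i + 1 + 1 + s) t = t ^ (q + 1) * k (i + 1 + 1 + s) := by
    rw [show m * q + i + 1 + 1 + s = m * q + (i + 1 + s) + 1 by ring,
      mgTerm_block k id t (by omega : i + 1 + s < m), id, mul_comm, add_right_comm]
  have hnext (s : ℕ) (hs : s < i + 1) :
      mgTerm k id m (m * q + i + 1 + 1 + (m - (i + 1) + s)) t = t ^ (q + 1) * t * k (s + 1) := by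
    rw [show m * q + i + 1 + 1 + (m - (i + 1) + s) = m * (q + 1) + s + 1 by
        rw [Nat.mul_succ]; omega,
      mgTerm_block k id t (by omega : s < m), id, mul_comm, pow_succ]
  rw [show range m = range (m - (i + 1) + (i + 1)) by rw [Nat.sub_add_cancel hi], sum_range_add,
    sum_congr rfl fun s hs => hinner s (mem_range.1 hs),
    sum_congr rfl fun s hs => hnext s (mem_range.1 hs), Usum_eq_sum_range, Lsum_eq_sum_range,
    ← mul_sum, ← mul_sum]
  ring

theorem mgTerm_id_nonneg (hm : 0 < m) (hk : ∀ i, 1 ≤ i → i ≤ m → 0 ≤ k i) {t : ℝ} (ht : 0 ≤ t)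
    {ℓ : ℕ} (hℓ : 1 ≤ ℓ) : 0 ≤ mgTerm k id m ℓ t := by
  obtain ⟨q, i, hi, rfl⟩ := exists_eq_block hm hℓ
  rw [mgTerm_block k id t hi]
  exact mul_nonneg (hk _ (by omega) (by omega)) (pow_nonneg ht _)

theorem hasSum_mgTerm_id_tail (hm : 0 < m) (hk : ∀ i, 1 ≤ i → i ≤ m → 0 ≤ k i) {t : ℝ}
    (ht0 : 0 ≤ t) (ht1 : t < 1) {ℓ : ℕ} (hℓ : 1 ≤ ℓ) :
    HasSum (fun s => mgTerm k id m (ℓ + s) t)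
      ((∑ s ∈ range m, mgTerm k id m (ℓ + s) t) / (1 - t)) :=
  hasSum_of_add_period hm (fun s => mgTerm_id_nonneg hm hk ht0 (by omega)) ht0 ht1 fun s => by
    rw [← add_assoc, mgTerm_id_add_period t hm (by omega)]

theorem mgTerm_bounds {f : ℝ → ℝ} {a b r ε : ℝ}
    (hf : ∀ y ∈ Icc (0 : ℝ) ε, a * y ^ r ≤ f y ∧ f y ≤ b * y ^ r) (hm : 0 < m)
    (hk : ∀ i, 1 ≤ i → i ≤ m → 0 ≤ k i) {x : ℝ} (hx0 : 0 ≤ x) (hx1 : x ≤ 1) (hxε : x ≤ ε)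
    {ℓ : ℕ} (hℓ : 1 ≤ ℓ) :
    a * mgTerm k id m ℓ (x ^ r) ≤ mgTerm k f m ℓ x ∧
      mgTerm k f m ℓ x ≤ b * mgTerm k id m ℓ (x ^ r) := by
  obtain ⟨q, i, hi, rfl⟩ := exists_eq_block hm hℓ
  have hpow : x ^ (q + 1) ∈ Icc 0 ε :=
    ⟨pow_nonneg hx0 _, (pow_le_of_le_one hx0 hx1 q.succ_ne_zero).trans hxε⟩
  have hki := hk (i + 1) (by omega) (by omega)
  rw [mgTerm_block k f x hi, mgTerm_block k id _ hi, id, Real.rpow_pow_comm hx0]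
  constructor
  · linarith [mul_le_mul_of_nonneg_left (hf _ hpow).1 hki]
  · linarith [mul_le_mul_of_nonneg_left (hf _ hpow).2 hki]

theorem mgTerm_nonneg {f : ℝ → ℝ} {a b r ε : ℝ} (ha : 0 ≤ a)
    (hf : ∀ y ∈ Icc (0 : ℝ) ε, a * y ^ r ≤ f y ∧ f y ≤ b * y ^ r) (hm : 0 < m)
    (hk : ∀ i, 1 ≤ i → i ≤ m → 0 ≤ k i) {x : ℝ} (hx0 : 0 ≤ x) (hx1 : x ≤ 1) (hxε : x ≤ ε)
    {ℓ : ℕ} (hℓ : 1 ≤ ℓ) : 0 ≤ mgTerm k f m ℓ x :=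
  (mul_nonneg ha (mgTerm_id_nonneg hm hk (Real.rpow_nonneg hx0 r) hℓ)).trans
    (mgTerm_bounds hf hm hk hx0 hx1 hxε hℓ).1

theorem summable_mgTerm_tail_and_tsum_le {f : ℝ → ℝ} {a b r ε : ℝ} (ha : 0 ≤ a)
    (hf : ∀ y ∈ Icc (0 : ℝ) ε, a * y ^ r ≤ f y ∧ f y ≤ b * y ^ r) (hm : 0 < m)
    (hk : ∀ i, 1 ≤ i → i ≤ m → 0 ≤ k i) {x : ℝ} (hx0 : 0 ≤ x) (hx1 : x < 1) (hxε : x ≤ ε)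
    (hr : 0 < r) (n : ℕ) :
    Summable (fun s => mgTerm k f m (n + 1 + s) x) ∧
      ∑' s, mgTerm k f m (n + 1 + s) x
        ≤ b * ((∑ s ∈ range m, mgTerm k id m (n + 1 + s) (x ^ r)) / (1 - x ^ r)) := by
  have hW := hasSum_mgTerm_id_tail hm hk (Real.rpow_nonneg hx0 r)
    (Real.rpow_lt_one hx0 hx1 hr) (ℓ := n + 1) (by omega)
  have hbounds (s : ℕ) := mgTerm_bounds hf hm hk hx0 hx1.le hxε (ℓ := n + 1 + s) (by omega)
  have hsum := (hW.summable.mul_left b).of_nonneg_of_le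
    (fun s => mgTerm_nonneg ha hf hm hk hx0 hx1.le hxε (by omega)) fun s => (hbounds s).2
  refine ⟨hsum, (hsum.tsum_le_tsum (fun s => (hbounds s).2) (hW.summable.mul_left b)).trans_eq ?_⟩
  rw [tsum_mul_left, hW.tsum_eq]

theorem tsum_mgTerm_tail_lt_s18 {f : ℝ → ℝ} {a b r ε : ℝ} (ha : 0 < a)
    (hf : ∀ y ∈ Icc (0 : ℝ) ε, a * y ^ r ≤ f y ∧ f y ≤ b * y ^ r) (hm : 0 < m)
    (hk : ∀ i, 1 ≤ i → i ≤ m → 0 ≤ k i) {x : ℝ} (hx0 : 0 < x) (hx1 : x < 1) (hxε : x ≤ ε)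
    (hr : 0 < r)
    (hgap : ∀ j, 1 ≤ j → j ≤ m → x ^ r * (a * k j + b * Lsum k j) < a * k j - b * Usum k m j)
    {n : ℕ} (hn : 1 ≤ n) :
    ∑' s, mgTerm k f m (n + 1 + s) x < mgTerm k f m n x := by
  obtain ⟨q, i, hi, rfl⟩ := exists_eq_block hm hn
  set t := x ^ r
  have h1t : 0 < 1 - t := sub_pos.2 (Real.rpow_lt_one hx0.le hx1 hr)
  have htq : 0 < t ^ (q + 1) := pow_pos (Real.rpow_pos_of_pos hx0 r) _
  have htail := (summable_mgTerm_tail_and_tsum_le ha.le hf hm hk hx0.le hx1 hxε hr (m * q + i + 1)).2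
  rw [sum_range_mgTerm_id_window t hi] at htail
  have hterm := (mgTerm_bounds hf hm hk hx0.le hx1.le hxε (ℓ := m * q + i + 1) (by omega)).1
  rw [mgTerm_block k id t hi, id] at hterm
  have hgap' : b * (t ^ (q + 1) * (Usum k m (i + 1) + t * Lsum k (i + 1)) / (1 - t))
      < a * (k (i + 1) * t ^ (q + 1)) := by
    rw [← mul_div_assoc, div_lt_iff₀ h1t]
    linarith [mul_lt_mul_of_pos_left (hgap (i + 1) (by omega) (by omega)) htq]
  linarith

end Multigeometric

theorem rpow_lt_of_lt_inf'_rpow {ι : Type*} {s : Finset ι} (H : s.Nonempty) {g : ι → ℝ}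
    (hg : ∀ j ∈ s, 0 < g j) {r y : ℝ} (hr : 0 < r) (hy : 0 ≤ y)
    (hlt : y < (s.inf' H g) ^ (1 / r)) {j : ι} (hj : j ∈ s) : y ^ r < g j := by
  have hinf : 0 < s.inf' H g := (lt_inf'_iff H).2 hg
  calc y ^ r < ((s.inf' H g) ^ (1 / r)) ^ r := Real.rpow_lt_rpow hy hlt hr
    _ = s.inf' H g := by rw [one_div, Real.rpow_inv_rpow hinf.le hr.ne']
    _ ≤ g j := inf'_le g hj

theorem rpow_mul_lt_of_lt_inf'_rpow {a b r x : ℝ} {m : ℕ} {k : ℕ → ℝ} (hm : 1 ≤ m) (ha : 0 < a)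
    (hb : 0 ≤ b) (hr : 0 < r) (hk : ∀ i, 1 ≤ i → i ≤ m → 0 < k i)
    (hU : ∀ j, 1 ≤ j → j ≤ m → b * Usum k m j < a * k j) (hx0 : 0 ≤ x)
    (hx : x < ((Finset.Icc 1 m).inf' (Finset.nonempty_Icc.mpr hm)
        (fun j => (a * k j - b * Usum k m j) / (a * k j + b * Lsum k j))) ^ (1 / r))
    {j : ℕ} (h1 : 1 ≤ j) (h2 : j ≤ m) :
    x ^ r * (a * k j + b * Lsum k j) < a * k j - b * Usum k m j := by
  have hden (j : ℕ) (h1 : 1 ≤ j) (h2 : j ≤ m) : 0 < a * k j + b * Lsum k j :=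
    add_pos_of_pos_of_nonneg (mul_pos ha (hk j h1 h2))
      (mul_nonneg hb (sum_nonneg fun i hi => (hk i (mem_Icc.1 hi).1 ((mem_Icc.1 hi).2.trans h2)).le))
  rw [← lt_div_iff₀ (hden j h1 h2)]
  refine rpow_lt_of_lt_inf'_rpow _ (fun i hi => ?_) hr hx0 hx (mem_Icc.2 ⟨h1, h2⟩)
  obtain ⟨hi1, hi2⟩ := mem_Icc.1 hi
  exact div_pos (sub_pos.2 (hU i hi1 hi2)) (hden i hi1 hi2)

theorem stmt_18_general (f : ℝ → ℝ) (a b r ε : ℝ) (ha : 0 < a) (hb : 0 < b) (hr : 0 < r)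
    (hε1 : ε < 1)
    (hf : ∀ x ∈ Set.Icc (0:ℝ) ε, a * x ^ r ≤ f x ∧ f x ≤ b * x ^ r)
    (m : ℕ) (hm : 1 ≤ m) (k : ℕ → ℝ)
    (hkmono : ∀ i j, 1 ≤ i → i ≤ j → j ≤ m → k j ≤ k i)
    (hkpos : 0 < k m)
    (dC : ℝ)
    (hdC : dC = ((Finset.Icc 1 m).inf' (Finset.nonempty_Icc.mpr hm)
        (fun j => (a * k j - b * Usum k m j) / (a * k j + b * Lsum k j))) ^ (1 / r))
    (hdCpos : ∀ j, 1 ≤ j → j ≤ m → b * Usum k m j < a * k j) :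
    ∀ x : ℝ, 0 < x → x < min ε dC →
      (∀ n : ℕ, 1 ≤ n →
        (∑' j : ℕ, mgTerm k f m (n + 1 + j) x) < mgTerm k f m n x) ∧
      Nonempty ((subsums fun n => mgTerm k f m n x) ≃ₜ cantorSet) := by
  intro x hx0 hx
  obtain ⟨hxε, hxd⟩ := lt_min_iff.1 hx
  have hx1 : x < 1 := hxε.trans hε1
  have hk (i : ℕ) (h1 : 1 ≤ i) (h2 : i ≤ m) : 0 < k i := hkpos.trans_le (hkmono i m h1 h2 le_rfl)
  have hk' (i : ℕ) (h1 : 1 ≤ i) (h2 : i ≤ m) : 0 ≤ k i := (hk i h1 h2).le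
  have hgap (j : ℕ) (h1 : 1 ≤ j) (h2 : j ≤ m) :=
    rpow_mul_lt_of_lt_inf'_rpow hm ha hb.le hr hk hdCpos hx0.le (hdC ▸ hxd) h1 h2
  have htail (n : ℕ) (hn : 1 ≤ n) : ∑' j, mgTerm k f m (n + 1 + j) x < mgTerm k f m n x :=
    tsum_mgTerm_tail_lt_s18 ha hf hm hk' hx0 hx1 hxε.le hr hgap hn
  refine ⟨htail, nonempty_subsums_homeomorph_cantorSet
    (fun n hn => mgTerm_nonneg ha.le hf hm hk' hx0.le hx1.le hxε.le hn) ?_ htail⟩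
  simpa only [zero_add, add_comm 1] using
    (summable_mgTerm_tail_and_tsum_le ha.le hf hm hk' hx0.le hx1 hxε.le hr 0).1

/-- For `0 < x < min{ε, d_C}` every term strictly exceeds its tail, hence the achievement
set is homeomorphic to the Cantor set. -/
theorem stmt_18 (f : ℝ → ℝ) (a b r ε : ℝ) (ha : 0 < a) (hb : 0 < b) (hr : 0 < r)
    (hε : 0 < ε) (hε1 : ε < 1)
    (hmono : MonotoneOn f (Set.Icc 0 ε))
    (hf : ∀ x ∈ Set.Icc (0:ℝ) ε, a * x ^ r ≤ f x ∧ f x ≤ b * x ^ r)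
    (m : ℕ) (hm : 1 ≤ m) (k : ℕ → ℝ)
    (hkmono : ∀ i j, 1 ≤ i → i ≤ j → j ≤ m → k j ≤ k i)
    (hkpos : 0 < k m)
    (dC : ℝ)
    (hdC : dC = ((Finset.Icc 1 m).inf' (Finset.nonempty_Icc.mpr hm)
        (fun j => (a * k j - b * Usum k m j) / (a * k j + b * Lsum k j))) ^ (1 / r))
    (hdCpos : ∀ j, 1 ≤ j → j ≤ m → b * Usum k m j < a * k j) :
    ∀ x : ℝ, 0 < x → x < min ε dC →
      (∀ n : ℕ, 1 ≤ n →
        (∑' j : ℕ, mgTerm k f m (n + 1 + j) x) < mgTerm k f m n x) ∧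
      Nonempty ((subsums fun n => mgTerm k f m n x) ≃ₜ cantorSet) :=
  stmt_18_general f a b r ε ha hb hr hε1 hf m hm k hkmono hkpos dC hdC hdCpos
end
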